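/- arXiv:cs/9907036 — 2 statements merged into one kernel-verified Lean document; each statement's English description precedes it below -/
import Mathlib

section
/- In the DodgsonSum election Ĉ,V̂ built from odd-voter Dodgson triples (C_j,c,V_j), the common candidate c is preferred to every separator candidate in S by Σ_j ||V_j|| of the 2Σ_j||V_j|| - 1 voters (a strict majority), and for each i, c is preferred to every candidate of C_i \ {c} by exactly half of the voters that do not simulate V_i. -/
/-!
A simulating voter ranks the separator block `S`, and every block other than its own, below
`c`; a normalizing voter ranks `c` directly below `S`, and ranks `Cs i \ {c}` below `c` exactly
when `i` is not in its index set. Hence `c` beats a separator in all `∑ j, ‖Vs j‖` simulating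
voters and in none of the `∑ j, ‖Vs j‖ - 1` normalizing ones. A candidate `e ∈ Cs i \ {c}`
lies in no other block, so outside the voters simulating `Vs i` it is beaten by `c` in every
simulating voter and in exactly `‖Vs i‖ / 2` normalizing voters; as `‖Vs i‖` is odd, that is
half of the `(∑ j ≠ i, ‖Vs j‖) + (∑ j, ‖Vs j‖) - 1` voters.
-/

/-- A voter's preference order is a list of candidates in *increasing* order of
preference (the head is the least preferred, the last element the most preferred).
`prefers v x y` means voter `v` strictly prefers `x` to `y`. -/
def prefers {α : Type*} [DecidableEq α] (v : List α) (x y : α) : Prop :=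
  v.idxOf y < v.idxOf x

/-- The number of voters in the profile `V` preferring `x` to `y`. -/
def numPrefer {α : Type*} [DecidableEq α] (V : List (List α)) (x y : α) : ℕ :=
  (V.filter (fun v => decide (v.idxOf y < v.idxOf x))).length

/-- `c` is a Condorcet winner: strictly more than half of the voters prefer `c`
to each other candidate. -/
def CondorcetWinner {α : Type*} [DecidableEq α] (C : Finset α) (V : List (List α))
    (c : α) : Prop :=
  c ∈ C ∧ ∀ d ∈ C, d ≠ c → V.length < 2 * numPrefer V c d

/-- One switch in a single preference order: exchange two adjacent candidates. -/
def SwitchVoter {α : Type*} (v w : List α) : Prop :=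
  ∃ (l r : List α) (x y : α), v = l ++ x :: y :: r ∧ w = l ++ y :: x :: r

/-- One switch in a profile: exchange two adjacent candidates in one voter's order. -/
def SwitchProfile {α : Type*} (V W : List (List α)) : Prop :=
  ∃ (P Q : List (List α)) (v w : List α),
    V = P ++ v :: Q ∧ W = P ++ w :: Q ∧ SwitchVoter v w

/-- `Reach R k a b`: `b` is reachable from `a` in exactly `k` `R`-steps. -/
def Reach {β : Type*} (R : β → β → Prop) : ℕ → β → β → Prop
  | 0, a, b => a = b
  | k + 1, a, b => ∃ m, R a m ∧ Reach R k m b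

/-- The Dodgson score of candidate `c`: the minimum number of switches needed to
make `c` a Condorcet winner. -/
noncomputable def DodgsonScore {α : Type*} [DecidableEq α] (C : Finset α)
    (V : List (List α)) (c : α) : ℕ :=
  sInf {k | ∃ W, Reach SwitchProfile k V W ∧ CondorcetWinner C W c}

/-- `v` is a valid preference order on the candidate set `C`. -/
def IsVoter {α : Type*} [DecidableEq α] (C : Finset α) (v : List α) : Prop :=
  v.Nodup ∧ ∀ x, x ∈ v ↔ x ∈ C

section DodgsonSum

variable {α : Type*} [DecidableEq α] {k : ℕ}

/-- Validity of the data for the `DodgsonSum` construction: `k` Dodgson triples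
`(Cs j, c, Vs j)` sharing only the common candidate `c`, each with an odd number
of voters (valid linear orders), together with a list `sL` of separator
candidates of cardinality `∑ j, ||Cs j|| · ||Vs j||`, disjoint from all the
`Cs j`. -/
def DSumOK (Cs : Fin k → Finset α) (Vs : Fin k → List (List α)) (c : α)
    (sL : List α) : Prop :=
  (∀ j, c ∈ Cs j) ∧
  (∀ j j', j ≠ j' → Cs j ∩ Cs j' = {c}) ∧
  (∀ j, Odd (Vs j).length) ∧
  (∀ j, ∀ v ∈ Vs j, IsVoter (Cs j) v) ∧
  sL.Nodup ∧
  sL.length = ∑ j, (Cs j).card * (Vs j).length ∧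
  (∀ z ∈ sL, ∀ j, z ∉ Cs j)

/-- The merged candidate set `Ĉ = S ∪ ⋃ j, Cs j`. -/
def DSumCands (Cs : Fin k → Finset α) (sL : List α) : Finset α :=
  sL.toFinset ∪ Finset.univ.biUnion Cs

/-- A voter simulating the voter `v` of `Vs i`: the `S`-block lowest, then the
blocks `Cs j \ {c}` for `j ≠ i` (in arbitrary order), then the original order
`v` on top (lists are in increasing preference). -/
def IsSimVoter (Cs : Fin k → Finset α) (c : α) (sL : List α) (i : Fin k)
    (v u : List α) : Prop :=
  ∃ B : List α, B.Nodup ∧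
    (∀ z, z ∈ B ↔ ∃ j, j ≠ i ∧ z ∈ Cs j ∧ z ≠ c) ∧
    u = sL ++ B ++ v

/-- A normalizing voter determined by the set `I` of indices whose blocks are
placed above the `S`-block: the blocks `Cs j \ {c}` for `j ∉ I` lowest, then
`c`, then the `S`-block, then the blocks `Cs j \ {c}` for `j ∈ I` on top. -/
def IsNormVoter (Cs : Fin k → Finset α) (c : α) (sL : List α)
    (I : Finset (Fin k)) (u : List α) : Prop :=
  ∃ B₁ B₂ : List α, B₁.Nodup ∧ B₂.Nodup ∧
    (∀ z, z ∈ B₁ ↔ ∃ j, j ∉ I ∧ z ∈ Cs j ∧ z ≠ c) ∧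
    (∀ z, z ∈ B₂ ↔ ∃ j, j ∈ I ∧ z ∈ Cs j ∧ z ≠ c) ∧
    u = B₁ ++ c :: (sL ++ B₂)

/-- The `DodgsonSum` election: for each `i` the voters of `Vs i` are replaced by
simulating voters `sims i`, and `(∑ j, ||Vs j||) - 1` normalizing voters
(each given by its index set paired with its order) are appended; for each `i`,
exactly `⌊||Vs i|| / 2⌋` normalizing voters place the block `Cs i` below `c`. -/
def IsDSumElection (Cs : Fin k → Finset α) (Vs : Fin k → List (List α))
    (c : α) (sL : List α) (sims : Fin k → List (List α))
    (normPairs : List (Finset (Fin k) × List α))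
    (Vhat : List (List α)) : Prop :=
  (∀ i, List.Forall₂ (IsSimVoter Cs c sL i) (Vs i) (sims i)) ∧
  (∀ p ∈ normPairs, IsNormVoter Cs c sL p.1 p.2) ∧
  normPairs.length = (∑ j, (Vs j).length) - 1 ∧
  (∀ i, (normPairs.filter (fun p => decide (i ∉ p.1))).length =
    (Vs i).length / 2) ∧
  Vhat = (List.ofFn sims).flatten ++ normPairs.map Prod.snd

end DodgsonSum

section Profiles

variable {α : Type*} [DecidableEq α]

theorem numPrefer_append (V W : List (List α)) (x y : α) :
    numPrefer (V ++ W) x y = numPrefer V x y + numPrefer W x y := by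
  simp [numPrefer, List.filter_append]

theorem numPrefer_eq_length {V : List (List α)} {x y : α} (h : ∀ v ∈ V, prefers v x y) :
    numPrefer V x y = V.length := by
  rw [numPrefer, List.filter_eq_self.2]
  simpa [prefers] using h

theorem numPrefer_eq_zero {V : List (List α)} {x y : α} (h : ∀ v ∈ V, ¬ prefers v x y) :
    numPrefer V x y = 0 := by
  rw [numPrefer, List.length_eq_zero_iff, List.filter_eq_nil_iff]
  simpa [prefers] using h

theorem numPrefer_map {β : Type*} (f : β → List α) (l : List β) (p : β → Prop)
    [DecidablePred p] {x y : α} (h : ∀ b ∈ l, prefers (f b) x y ↔ p b) :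
    numPrefer (l.map f) x y = (l.filter p).length := by
  rw [numPrefer, List.filter_map, List.length_map]
  exact congrArg List.length <| List.filter_congr fun b hb => by simpa [prefers] using h b hb

theorem prefers_append_of_notMem_of_mem {P v : List α} {x y : α} (hx : x ∉ P) (hy : y ∈ P) :
    prefers (P ++ v) x y := by
  rw [prefers, List.idxOf_append_of_mem hy, List.idxOf_append_of_notMem hx]
  exact (List.idxOf_lt_length_iff.2 hy).trans_le (Nat.le_add_right _ _)

theorem not_prefers_append_cons {P r : List α} {x c : α} (hx : x ∉ P) :
    ¬ prefers (P ++ c :: r) c x := by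
  have hc : (P ++ c :: r).idxOf c ≤ P.length := by
    by_cases hcP : c ∈ P
    · rw [List.idxOf_append_of_mem hcP]
      exact (List.idxOf_lt_length_iff.2 hcP).le
    · simp [List.idxOf_append_of_notMem hcP]
  rw [prefers, List.idxOf_append_of_notMem hx]
  omega

end Profiles

theorem List.Forall₂.forall_mem_right {β γ : Type*} {R : β → γ → Prop} {P : γ → Prop}
    {l₁ : List β} {l₂ : List γ} (h : List.Forall₂ R l₁ l₂) (hR : ∀ a b, R a b → P b) :
    ∀ b ∈ l₂, P b := by
  induction h with
  | nil => simp
  | cons hab _ ih => exact List.forall_mem_cons.2 ⟨hR _ _ hab, ih⟩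

theorem length_flatten_ofFn {β : Type*} {k : ℕ} (f : Fin k → List β) :
    (List.ofFn f).flatten.length = ∑ j, (f j).length := by
  simp [List.sum_ofFn]

theorem length_flatten_ofFn_of_forall₂ {β γ : Type*} {k : ℕ} {R : Fin k → β → γ → Prop}
    {f : Fin k → List β} {g : Fin k → List γ} (h : ∀ j, List.Forall₂ (R j) (f j) (g j)) :
    (List.ofFn g).flatten.length = ∑ j, (f j).length := by
  rw [length_flatten_ofFn]
  exact Finset.sum_congr rfl fun j _ => (h j).length_eq.symm

theorem length_flatten_ofFn_ite_add {β : Type*} {k : ℕ} (f : Fin k → List β) (i : Fin k) :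
    (List.ofFn fun j => if j = i then [] else f j).flatten.length + (f i).length =
      (List.ofFn f).flatten.length := by
  rw [length_flatten_ofFn, length_flatten_ofFn, ← Finset.add_sum_erase _ _ (Finset.mem_univ i),
    ← Finset.add_sum_erase _ _ (Finset.mem_univ i), if_pos rfl, List.length_nil, zero_add,
    add_comm]
  exact congrArg _ <| Finset.sum_congr rfl fun j hj => by rw [if_neg (Finset.ne_of_mem_erase hj)]

theorem sum_length_pos_of_mem {α : Type*} {k : ℕ} {Cs : Fin k → Finset α}
    {Vs : Fin k → List (List α)} {sL : List α}
    (hlen : sL.length = ∑ j, (Cs j).card * (Vs j).length) {z : α} (hz : z ∈ sL) :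
    0 < ∑ j, (Vs j).length := by
  obtain ⟨j, -, hj⟩ := Finset.exists_ne_zero_of_sum_ne_zero
    (hlen ▸ List.length_pos_of_mem hz).ne'
  exact (Nat.pos_of_ne_zero (right_ne_zero_of_mul hj)).trans_le
    (Finset.single_le_sum (f := fun j => (Vs j).length) (fun _ _ => Nat.zero_le _)
      (Finset.mem_univ j))

section DodgsonSum

variable {α : Type*} [DecidableEq α] {k : ℕ} {Cs : Fin k → Finset α} {c : α} {sL : List α}

theorem eq_of_mem_of_mem_of_ne {i j : Fin k} {e : α}
    (hinter : ∀ j j', j ≠ j' → Cs j ∩ Cs j' = {c}) (hei : e ∈ Cs i) (hej : e ∈ Cs j)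
    (hec : e ≠ c) : j = i := by
  by_contra hji
  have he : e ∈ Cs j ∩ Cs i := Finset.mem_inter.2 ⟨hej, hei⟩
  rw [hinter j i hji, Finset.mem_singleton] at he
  exact hec he

theorem IsSimVoter.prefers_of_mem_sL {i : Fin k} {v u : List α} {z : α}
    (h : IsSimVoter Cs c sL i v u) (hc : c ∉ sL) (hz : z ∈ sL) : prefers u c z := by
  obtain ⟨B, -, hB, rfl⟩ := h
  exact prefers_append_of_notMem_of_mem (by simpa [hc] using hB c) (List.mem_append_left _ hz)

theorem IsSimVoter.prefers_of_mem_block {i j : Fin k} {v u : List α} {e : α}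
    (h : IsSimVoter Cs c sL i v u) (hc : c ∉ sL) (hji : j ≠ i) (he : e ∈ Cs j) (hec : e ≠ c) :
    prefers u c e := by
  obtain ⟨B, -, hB, rfl⟩ := h
  exact prefers_append_of_notMem_of_mem (by simpa [hc] using hB c)
    (List.mem_append_right _ ((hB e).2 ⟨j, hji, he, hec⟩))

theorem IsNormVoter.not_prefers_of_notMem {I : Finset (Fin k)} {u : List α} {z : α}
    (h : IsNormVoter Cs c sL I u) (hz : ∀ j, z ∉ Cs j) : ¬ prefers u c z := by
  obtain ⟨B₁, B₂, -, -, hB₁, -, rfl⟩ := h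
  exact not_prefers_append_cons (by simpa [hz] using hB₁ z)

theorem IsNormVoter.prefers_iff {I : Finset (Fin k)} {u : List α} {i : Fin k} {e : α}
    (h : IsNormVoter Cs c sL I u) (he : e ∈ Cs i) (hec : e ≠ c)
    (honly : ∀ j, e ∈ Cs j → j = i) : prefers u c e ↔ i ∉ I := by
  obtain ⟨B₁, B₂, -, -, hB₁, -, rfl⟩ := h
  refine ⟨fun hpref hiI => ?_, fun hiI => ?_⟩
  · refine not_prefers_append_cons (fun heB => ?_) hpref
    obtain ⟨j, hjI, hj, -⟩ := (hB₁ e).1 heB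
    exact hjI (honly j hj ▸ hiI)
  · exact prefers_append_of_notMem_of_mem (by simpa using hB₁ c) ((hB₁ e).2 ⟨i, hiI, he, hec⟩)

variable {Vs : Fin k → List (List α)} {sims : Fin k → List (List α)}
  {normPairs : List (Finset (Fin k) × List α)}

theorem sims_prefers_of_mem_sL
    (hsim : ∀ i, List.Forall₂ (IsSimVoter Cs c sL i) (Vs i) (sims i))
    (hcC : ∀ j, c ∈ Cs j) (hsep : ∀ z ∈ sL, ∀ j, z ∉ Cs j) {z : α} (hz : z ∈ sL) :
    ∀ u ∈ (List.ofFn sims).flatten, prefers u c z :=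
  List.forall_mem_flatten.2 <| List.forall_mem_ofFn_iff.2 fun j =>
    (hsim j).forall_mem_right fun _ _ h =>
      h.prefers_of_mem_sL (fun hc => hsep c hc j (hcC j)) hz

theorem otherSims_prefers_of_mem_block
    (hsim : ∀ i, List.Forall₂ (IsSimVoter Cs c sL i) (Vs i) (sims i))
    (hcC : ∀ j, c ∈ Cs j) (hsep : ∀ z ∈ sL, ∀ j, z ∉ Cs j) {i : Fin k} {e : α}
    (he : e ∈ Cs i) (hec : e ≠ c) :
    ∀ u ∈ (List.ofFn fun j => if j = i then [] else sims j).flatten, prefers u c e := by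
  refine List.forall_mem_flatten.2 <| List.forall_mem_ofFn_iff.2 fun j => ?_
  split_ifs with hji
  · simp
  · exact (hsim j).forall_mem_right fun _ _ h =>
      h.prefers_of_mem_block (fun hc => hsep c hc j (hcC j)) (Ne.symm hji) he hec

theorem normPairs_not_prefers (hnorm : ∀ p ∈ normPairs, IsNormVoter Cs c sL p.1 p.2) {z : α}
    (hz : ∀ j, z ∉ Cs j) : ∀ u ∈ normPairs.map Prod.snd, ¬ prefers u c z :=
  List.forall_mem_map.2 fun p hp => (hnorm p hp).not_prefers_of_notMem hz

theorem numPrefer_normPairs (hnorm : ∀ p ∈ normPairs, IsNormVoter Cs c sL p.1 p.2)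
    (hinter : ∀ j j', j ≠ j' → Cs j ∩ Cs j' = {c}) {i : Fin k} {e : α} (he : e ∈ Cs i)
    (hec : e ≠ c) :
    numPrefer (normPairs.map Prod.snd) c e =
      (normPairs.filter fun p => decide (i ∉ p.1)).length :=
  numPrefer_map _ _ _ fun p hp => (hnorm p hp).prefers_iff he hec
    fun _ hj => eq_of_mem_of_mem_of_ne hinter he hj hec

end DodgsonSum

/-- In the `DodgsonSum` election, `c` is preferred to every
separator candidate by `∑ j, ||Vs j||` of the `2 ∑ j, ||Vs j|| - 1` voters
(a strict majority), and for each `i`, `c` is preferred to every candidate of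
`Cs i \ {c}` by exactly half of the voters that do not simulate `Vs i`. -/
theorem dodgsonSum_counts {α : Type*} [DecidableEq α] {k : ℕ}
    (Cs : Fin k → Finset α) (Vs : Fin k → List (List α)) (c : α) (sL : List α)
    (sims : Fin k → List (List α)) (normPairs : List (Finset (Fin k) × List α))
    (Vhat : List (List α))
    (hok : DSumOK Cs Vs c sL)
    (hel : IsDSumElection Cs Vs c sL sims normPairs Vhat) :
    (∀ z ∈ sL, numPrefer Vhat c z = ∑ j, (Vs j).length ∧
      Vhat.length < 2 * numPrefer Vhat c z) ∧
    (∀ i : Fin k, ∀ e ∈ Cs i, e ≠ c →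
      2 * numPrefer
          ((List.ofFn (fun j => if j = i then ([] : List (List α)) else sims j)).flatten
            ++ normPairs.map Prod.snd) c e =
        ((List.ofFn (fun j => if j = i then ([] : List (List α)) else sims j)).flatten
            ++ normPairs.map Prod.snd).length) := by
  obtain ⟨hcC, hinter, hodd, -, -, hlen, hsep⟩ := hok
  obtain ⟨hsim, hnorm, hnlen, hnfilter, rfl⟩ := hel
  refine ⟨fun z hz => ?_, fun i e he hec => ?_⟩
  · have hcount : numPrefer ((List.ofFn sims).flatten ++ normPairs.map Prod.snd) c z =
        ∑ j, (Vs j).length := by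
      rw [numPrefer_append, numPrefer_eq_length (sims_prefers_of_mem_sL hsim hcC hsep hz),
        numPrefer_eq_zero (normPairs_not_prefers hnorm (hsep z hz)), add_zero,
        length_flatten_ofFn_of_forall₂ hsim]
    have hpos := sum_length_pos_of_mem hlen hz
    refine ⟨hcount, ?_⟩
    rw [hcount, List.length_append, List.length_map, hnlen, length_flatten_ofFn_of_forall₂ hsim]
    omega
  · have hsplit : (List.ofFn fun j => if j = i then [] else sims j).flatten.length +
        (Vs i).length = ∑ j, (Vs j).length := by
      rw [← length_flatten_ofFn_of_forall₂ hsim, (hsim i).length_eq]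
      exact length_flatten_ofFn_ite_add sims i
    obtain ⟨m, hm⟩ := hodd i
    rw [numPrefer_append, numPrefer_eq_length (otherSims_prefers_of_mem_block hsim hcC hsep he hec),
      numPrefer_normPairs hnorm hinter he hec, hnfilter i, List.length_append, List.length_map,
      hnlen]
    omega
end

section
/- In the Merge construction applied to odd-voter Dodgson triples (C,c,V) and (D,d,W) with c ≠ d and disjoint candidate sets, the Dodgson score of c in the merged election equals Score(C,c,V) + 1, and the Dodgson score of d in the merged election equals Score(D,d,W) + 1. -/
section Merge

variable {α : Type*} [DecidableEq α]

/-- Validity of the data for the `Merge` construction: Dodgson triples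
`(C, c, V)` and `(D, d, W)` with `c ≠ d`, disjoint candidate sets, both with an
odd number of voters and `||V|| ≥ ||W||`; `cL` and `dL` are fixed enumerations
of `C \ {c}` and `D \ {d}`; `sL` and `tL` enumerate the fresh separator sets `S`
and `T`, each of size `2(||C||·||V|| + ||D||·||W||)`. -/
def MergeOK (C D : Finset α) (c d : α) (V W : List (List α))
    (cL dL sL tL : List α) : Prop :=
  c ∈ C ∧ d ∈ D ∧ c ≠ d ∧ Disjoint C D ∧
  Odd V.length ∧ Odd W.length ∧ W.length ≤ V.length ∧
  (∀ v ∈ V, IsVoter C v) ∧ (∀ w ∈ W, IsVoter D w) ∧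
  cL.Nodup ∧ (∀ z, z ∈ cL ↔ (z ∈ C ∧ z ≠ c)) ∧
  dL.Nodup ∧ (∀ z, z ∈ dL ↔ (z ∈ D ∧ z ≠ d)) ∧
  sL.Nodup ∧ tL.Nodup ∧
  sL.length = 2 * (C.card * V.length + D.card * W.length) ∧
  tL.length = 2 * (C.card * V.length + D.card * W.length) ∧
  (∀ z ∈ sL, z ∉ C ∧ z ∉ D ∧ z ∉ tL) ∧
  (∀ z ∈ tL, z ∉ C ∧ z ∉ D)

/-- The merged candidate set `Ĉ = C ∪ D ∪ S ∪ T`. -/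
def MergeCands (C D : Finset α) (sL tL : List α) : Finset α :=
  C ∪ D ∪ sL.toFinset ∪ tL.toFinset

/-- The merged voter list `V̂` (orders are lists in increasing preference):
(a) for each voter `v` of `V` the order `⟨d < S < D\{d} < T < v⟩`;
(b) for each voter `w` of `W` the order `⟨T < c < S < C\{c} < w⟩`;
(c) `⌈||V||/2⌉ - ⌈||W||/2⌉` voters `⟨T < c < S < C\{c} < D\{d} < d⟩`;
(d) `⌈||V||/2⌉` voters `⟨T < C\{c} < D\{d} < reversed S < c < d⟩`;
(e) `⌈||W||/2⌉` voters `⟨T < C\{c} < D\{d} < S < d < c⟩`. -/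
def MergeProfile (c d : α) (V W : List (List α)) (cL dL sL tL : List α) :
    List (List α) :=
  V.map (fun v => [d] ++ sL ++ dL ++ tL ++ v) ++
  W.map (fun w => tL ++ [c] ++ sL ++ cL ++ w) ++
  List.replicate ((V.length + 1) / 2 - (W.length + 1) / 2)
    (tL ++ [c] ++ sL ++ cL ++ dL ++ [d]) ++
  List.replicate ((V.length + 1) / 2) (tL ++ cL ++ dL ++ sL.reverse ++ [c, d]) ++
  List.replicate ((W.length + 1) / 2) (tL ++ cL ++ dL ++ sL ++ [d, c])

end Merge

/-!
Upper bounds: an optimal switch sequence for `(C, c, V)` can be replayed inside the (a) voters,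
whose `V`-orders are suffixes. Afterwards `c` beats every candidate except `d`, with whom it
ties, and one switch `c ↔ d` at the top of a (d) voter makes `c` the Condorcet winner.
Symmetrically for `d`: replay inside the (b) voters, then switch `d ↔ c` at the top of an (e)
voter.

Lower bounds: in the merged election (`2‖V‖ + ‖W‖ + 1` voters) `c` exactly ties with `d`. Of
`k` switches making `c` the winner, those exchanging two candidates of `C` inside the (a) voters
transform the projection of these voters onto `C`, which is `V`, and never change the `c`–`d`
margin; so there are at most `k - 1` of them. The projection ends with `c` as Condorcet winner:
if `k ≤ ‖C‖‖V‖` (otherwise the bound is trivial) then `2k ≤ ‖S‖`, so the separator `S` keeps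
every other candidate of `C` above `c` in the (b) and (c) voters, and `c` needs a majority among
the (a) voters alone. Hence `Score(C, c, V) ≤ k - 1`. For `d`, project the (b) voters onto `D`;
`S` keeps `d` at the bottom of every (a) voter.
-/

section Preference

variable {α : Type*} [DecidableEq α]

instance (v : List α) (x y : α) : Decidable (prefers v x y) :=
  inferInstanceAs (Decidable (_ < _))

theorem numPrefer_eq_countP (V : List (List α)) (x y : α) :
    numPrefer V x y = V.countP (prefers · x y) :=
  List.countP_eq_length_filter.symm

theorem numPrefer_le_length (V : List (List α)) (x y : α) : numPrefer V x y ≤ V.length :=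
  List.length_filter_le _ _

theorem numPrefer_eq_take_add_drop (V : List (List α)) (x y : α) (i j : ℕ) :
    numPrefer V x y = numPrefer (V.take i) x y + numPrefer ((V.drop i).take j) x y +
      numPrefer ((V.drop i).drop j) x y := by
  conv_lhs => rw [← List.take_append_drop i V, ← List.take_append_drop j (V.drop i)]
  simp only [numPrefer_eq_countP, List.countP_append, Nat.add_assoc]

theorem prefers_cons_iff {z : α} {u : List α} {x y : α} :
    prefers (z :: u) x y ↔ x ≠ z ∧ (y = z ∨ prefers u x y) := by
  unfold prefers
  by_cases hx : x = z <;> by_cases hy : y = z <;> simp [hx, hy, Ne.symm]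

theorem prefers_of_isPrefix {L u : List α} {x y : α} (hL : L <+: u) (hy : y ∈ L) (hx : x ∉ L) :
    prefers u x y := by
  obtain ⟨R, rfl⟩ := hL
  induction L with
  | nil => simp at hy
  | cons z L ih =>
    simp only [List.mem_cons, not_or] at hx hy
    rw [List.cons_append, prefers_cons_iff]
    exact ⟨hx.1, hy.imp_right (ih · hx.2)⟩

theorem not_prefers_of_isPrefix {L u : List α} {x y : α} (hL : L <+: u) (hx : x ∈ L)
    (hy : y ∉ L) : ¬ prefers u x y := by
  obtain ⟨R, rfl⟩ := hL
  induction L with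
  | nil => simp at hx
  | cons z L ih =>
    simp only [List.mem_cons, not_or] at hx hy
    rw [List.cons_append, prefers_cons_iff]
    rintro ⟨hxz, hyz | h⟩
    · exact hy.1 hyz
    · exact ih (hx.resolve_left hxz) hy.2 h

theorem idxOf_add_length_lt_idxOf {L M R : List α} {x y : α} (hxL : x ∉ L) (hyL : y ∉ L)
    (hyx : y ≠ x) (hyM : y ∉ M) :
    (L ++ x :: (M ++ R)).idxOf x + M.length < (L ++ x :: (M ++ R)).idxOf y := by
  rw [List.idxOf_append_of_notMem hxL, List.idxOf_append_of_notMem hyL, List.idxOf_cons_self,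
    List.idxOf_cons_ne _ (Ne.symm hyx), List.idxOf_append_of_notMem hyM]
  omega

theorem prefers_append_iff_of_notMem {L R : List α} {x y : α} (hx : x ∉ L) (hy : y ∉ L) :
    prefers (L ++ R) x y ↔ prefers R x y := by
  unfold prefers
  rw [List.idxOf_append_of_notMem hx, List.idxOf_append_of_notMem hy]
  omega

theorem prefers_swap_iff {l r : List α} {p q x y : α} (hp : y ≠ p) (hq : y ≠ q) :
    prefers (l ++ q :: p :: r) x y ↔ prefers (l ++ p :: q :: r) x y := by
  induction l with
  | nil => simp only [List.nil_append, prefers_cons_iff, hp, hq, false_or]; tauto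
  | cons z l ih => simp only [List.cons_append, prefers_cons_iff, ih]

theorem prefers_filter_iff {f : α → Bool} {x y : α} (hx : f x) (hy : f y) (u : List α) :
    prefers (u.filter f) x y ↔ prefers u x y := by
  induction u with
  | nil => rfl
  | cons z u ih =>
    by_cases hz : f z
    · simp only [List.filter_cons_of_pos hz, prefers_cons_iff, ih]
    · have hxz : x ≠ z := by rintro rfl; exact hz hx
      have hyz : y ≠ z := by rintro rfl; exact hz hy
      simp only [List.filter_cons_of_neg hz, prefers_cons_iff, ih, hyz, false_or]
      exact ⟨fun h => ⟨hxz, h⟩, And.right⟩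

end Preference

theorem Reach.trans {β : Type*} {R : β → β → Prop} {k l : ℕ} {a b c : β}
    (h₁ : Reach R k a b) (h₂ : Reach R l b c) : Reach R (k + l) a c := by
  induction k generalizing a with
  | zero => cases h₁; simpa using h₂
  | succ k ih =>
    obtain ⟨m, ham, hmb⟩ := h₁
    rw [Nat.succ_add]
    exact ⟨m, ham, ih hmb⟩

theorem Reach.single {β : Type*} {R : β → β → Prop} {a b : β} (h : R a b) : Reach R 1 a b :=
  ⟨b, h, rfl⟩

theorem Reach.map {β γ : Type*} {R : β → β → Prop} {S : γ → γ → Prop} (f : β → γ)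
    (hf : ∀ a b, R a b → S (f a) (f b)) {k : ℕ} {a b : β} (h : Reach R k a b) :
    Reach S k (f a) (f b) := by
  induction k generalizing a with
  | zero => cases h; rfl
  | succ k ih =>
    obtain ⟨m, ham, hmb⟩ := h
    exact ⟨f m, hf a m ham, ih hmb⟩

theorem List.Forall₂.comp {β γ δ : Type*} {R : β → γ → Prop} {S : γ → δ → Prop}
    {l₁ : List β} {l₂ : List γ} {l₃ : List δ} (h₁ : Forall₂ R l₁ l₂) (h₂ : Forall₂ S l₂ l₃) :
    Forall₂ (Relation.Comp R S) l₁ l₃ := by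
  induction h₁ generalizing l₃ with
  | nil => cases h₂; exact .nil
  | cons hab _ ih => cases h₂ with | cons hbc h₂ => exact .cons ⟨_, hab, hbc⟩ (ih h₂)

section Switch

variable {α : Type*}

theorem SwitchVoter.symm {v w : List α} (h : SwitchVoter v w) : SwitchVoter w v := by
  obtain ⟨l, r, x, y, rfl, rfl⟩ := h
  exact ⟨l, r, y, x, rfl, rfl⟩

theorem reach_moveToEnd (x : α) (l r : List α) :
    Reach SwitchVoter r.length (l ++ x :: r) (l ++ r ++ [x]) := by
  induction r generalizing l with
  | nil => simp [Reach]
  | cons y r ih =>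
    refine ⟨l ++ [y] ++ x :: r, ⟨l, r, x, y, rfl, by simp⟩, ?_⟩
    simpa using ih (l ++ [y])

theorem SwitchProfile.forall₂ {A B : List (List α)} (h : SwitchProfile A B) :
    List.Forall₂ (fun u w => u = w ∨ SwitchVoter u w) A B := by
  obtain ⟨P, Q, v, w, rfl, rfl, hvw⟩ := h
  exact List.rel_append (List.forall₂_same.2 fun _ _ => .inl rfl)
    (.cons (.inr hvw) (List.forall₂_same.2 fun _ _ => .inl rfl))

theorem Reach.forall₂ {k : ℕ} {A B : List (List α)} (h : Reach SwitchProfile k A B) :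
    List.Forall₂ (fun u w => ∃ t ≤ k, Reach SwitchVoter t u w) A B := by
  induction k generalizing A with
  | zero => cases h; exact List.forall₂_same.2 fun u _ => ⟨0, le_rfl, rfl⟩
  | succ k ih =>
    obtain ⟨M, hAM, hMB⟩ := h
    refine (hAM.forall₂.comp (ih hMB)).imp fun u w ⟨m, hum, t, htk, hmw⟩ => ?_
    rcases hum with rfl | hum
    · exact ⟨t, by omega, hmw⟩
    · exact ⟨t + 1, by omega, m, hum, hmw⟩

theorem Reach.length_eq {k : ℕ} {A B : List (List α)} (h : Reach SwitchProfile k A B) :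
    A.length = B.length :=
  h.forall₂.length_eq

theorem SwitchProfile.embed {A B : List (List α)} (h : SwitchProfile A B) (L : List α)
    (P R : List (List α)) :
    SwitchProfile (P ++ A.map (L ++ ·) ++ R) (P ++ B.map (L ++ ·) ++ R) := by
  obtain ⟨P', Q', v, w, rfl, rfl, l, r, x, y, rfl, rfl⟩ := h
  exact ⟨P ++ P'.map (L ++ ·), Q'.map (L ++ ·) ++ R, L ++ (l ++ x :: y :: r),
    L ++ (l ++ y :: x :: r), by simp, by simp, L ++ l, r, x, y, by simp, by simp⟩

theorem exists_reach_of_forall_mem {p : List α → Prop} {K : ℕ} {A : List (List α)}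
    (h : ∀ u ∈ A, ∃ t ≤ K, ∃ w, Reach SwitchVoter t u w ∧ p w) :
    ∃ k ≤ K * A.length, ∃ B, Reach SwitchProfile k A B ∧ ∀ w ∈ B, p w := by
  induction A with
  | nil => exact ⟨0, by simp, [], rfl, by simp⟩
  | cons u A ih =>
    simp only [List.forall_mem_cons] at h
    obtain ⟨⟨t, htK, w, huw, hw⟩, hA⟩ := h
    obtain ⟨k, hk, B, hAB, hB⟩ := ih hA
    refine ⟨t + k, by rw [List.length_cons, Nat.mul_succ]; omega, w :: B, ?_, ?_⟩
    · exact (huw.map (· :: A) fun v v' h => ⟨[], A, v, v', rfl, rfl, h⟩).trans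
        (hAB.map (w :: ·) fun X Y ⟨P, Q, v, v', hX, hY, h⟩ =>
          ⟨w :: P, Q, v, v', by simp [hX], by simp [hY], h⟩)
    · simpa [hw] using hB

variable [DecidableEq α]

theorem SwitchVoter.idxOf_le {v w : List α} (h : SwitchVoter v w) (z : α) :
    v.idxOf z ≤ w.idxOf z + 1 := by
  obtain ⟨l, r, x, y, rfl, rfl⟩ := h
  by_cases hz : z ∈ l
  · simp [List.idxOf_append_of_mem hz]
  · simp only [List.idxOf_append_of_notMem hz, List.idxOf_cons]
    cases x == z <;> cases y == z <;> simp only [cond_true, cond_false] <;> omega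

theorem Reach.idxOf_le {t : ℕ} {v w : List α} (h : Reach SwitchVoter t v w) (z : α) :
    v.idxOf z ≤ w.idxOf z + t ∧ w.idxOf z ≤ v.idxOf z + t := by
  induction t generalizing v with
  | zero => cases h; omega
  | succ t ih =>
    obtain ⟨m, hvm, hmw⟩ := h
    have := hvm.idxOf_le z
    have := hvm.symm.idxOf_le z
    have := ih hmw
    omega

theorem Reach.not_prefers {t : ℕ} {v w : List α} {x y : α} (h : Reach SwitchVoter t v w)
    (hfar : v.idxOf x + 2 * t < v.idxOf y) : ¬ prefers w x y := by
  have := h.idxOf_le x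
  have := h.idxOf_le y
  unfold prefers
  omega

theorem numPrefer_eq_zero_of_forall₂ {k : ℕ} {A B : List (List α)} {x y : α}
    (h : List.Forall₂ (fun u w => ∃ t ≤ k, Reach SwitchVoter t u w) A B)
    (hfar : ∀ u ∈ A, u.idxOf x + 2 * k < u.idxOf y) : numPrefer B x y = 0 := by
  induction h with
  | nil => rfl
  | cons huw _ ih =>
    obtain ⟨t, htk, huw⟩ := huw
    simp only [List.forall_mem_cons] at hfar
    rw [numPrefer_eq_countP, List.countP_cons, ← numPrefer_eq_countP, ih hfar.2]
    simpa using huw.not_prefers (by omega)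

end Switch

section Dodgson

variable {α : Type*} [DecidableEq α]

theorem dodgsonScore_le {C : Finset α} {A B : List (List α)} {c : α} {k : ℕ}
    (h : Reach SwitchProfile k A B) (hB : CondorcetWinner C B c) : DodgsonScore C A c ≤ k :=
  Nat.sInf_le ⟨B, h, hB⟩

theorem dodgsonScore_eq_of_forall_le {C : Finset α} {A B : List (List α)} {c : α} {k : ℕ}
    (h : Reach SwitchProfile k A B) (hB : CondorcetWinner C B c)
    (hmin : ∀ j B', Reach SwitchProfile j A B' → CondorcetWinner C B' c → k ≤ j) :
    DodgsonScore C A c = k :=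
  le_antisymm (dodgsonScore_le h hB)
    (le_csInf ⟨k, B, h, hB⟩ fun j ⟨B', hj, hB'⟩ => hmin j B' hj hB')

theorem IsVoter.length_eq {C : Finset α} {v : List α} (h : IsVoter C v) :
    v.length = C.card := by
  rw [← List.toFinset_card_of_nodup h.1]
  congr 1
  ext x
  simp [h.2 x]

theorem IsVoter.exists_reach_prefers {C : Finset α} {v : List α} {c : α} (h : IsVoter C v)
    (hc : c ∈ C) :
    ∃ t ≤ C.card, ∃ w, Reach SwitchVoter t v w ∧ ∀ x ∈ C, x ≠ c → prefers w c x := by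
  obtain ⟨l, r, rfl⟩ := List.append_of_mem ((h.2 c).2 hc)
  have hclr : c ∉ l ++ r := (List.nodup_cons.1 (List.nodup_middle.1 h.1)).1
  refine ⟨r.length, ?_, l ++ r ++ [c], reach_moveToEnd c l r, fun x hx hxc => ?_⟩
  · rw [← h.length_eq, List.length_append, List.length_cons]
    omega
  · refine prefers_of_isPrefix (List.prefix_append _ _) ?_ hclr
    simpa [hxc] using (h.2 x).2 hx

theorem exists_reach_condorcetWinner {C : Finset α} {A : List (List α)} {c : α} (hc : c ∈ C)
    (hA : ∀ v ∈ A, IsVoter C v) (hA₀ : A ≠ []) :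
    ∃ k ≤ C.card * A.length, ∃ B, Reach SwitchProfile k A B ∧ CondorcetWinner C B c := by
  obtain ⟨k, hk, B, hAB, hB⟩ := exists_reach_of_forall_mem fun v hv =>
    (hA v hv).exists_reach_prefers hc
  refine ⟨k, hk, B, hAB, hc, fun x hx hxc => ?_⟩
  have hBx : numPrefer B c x = B.length := by
    rw [numPrefer_eq_countP, List.countP_eq_length]
    simpa using fun w hw => hB w hw x hx hxc
  have := List.length_pos_iff.2 hA₀
  rw [hBx, ← hAB.length_eq]
  omega

theorem dodgsonScore_le_card_mul {C : Finset α} {A : List (List α)} {c : α} (hc : c ∈ C)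
    (hA : ∀ v ∈ A, IsVoter C v) (hA₀ : A ≠ []) : DodgsonScore C A c ≤ C.card * A.length :=
  let ⟨_, hk, _, hAB, hB⟩ := exists_reach_condorcetWinner hc hA hA₀
  (dodgsonScore_le hAB hB).trans hk

theorem exists_reach_dodgsonScore {C : Finset α} {A : List (List α)} {c : α} (hc : c ∈ C)
    (hA : ∀ v ∈ A, IsVoter C v) (hA₀ : A ≠ []) :
    ∃ B, Reach SwitchProfile (DodgsonScore C A c) A B ∧ CondorcetWinner C B c :=
  let ⟨k, _, hk⟩ := exists_reach_condorcetWinner hc hA hA₀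
  Nat.sInf_mem (s := {k | ∃ B, Reach SwitchProfile k A B ∧ CondorcetWinner C B c}) ⟨k, hk⟩

end Dodgson

theorem List.take_drop_append_cons {β : Type*} (P Q : List β) (v w : β) (lo len : ℕ) :
    ((P ++ v :: Q).drop lo).take len = ((P ++ w :: Q).drop lo).take len ∨
      ∃ P' Q', ((P ++ v :: Q).drop lo).take len = P' ++ v :: Q' ∧
        ((P ++ w :: Q).drop lo).take len = P' ++ w :: Q' := by
  rw [List.drop_append, List.drop_append]
  cases lo - P.length with
  | succ i => exact .inl rfl
  | zero =>
    rw [List.drop_zero, List.drop_zero, List.take_append, List.take_append]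
    cases len - (P.drop lo).length with
    | zero => exact .inl rfl
    | succ j => exact .inr ⟨_, _, rfl, rfl⟩

section Projection

variable {α : Type*}

theorem filter_switch_of_not_and {f : α → Bool} (l r : List α) {p q : α} (h : ¬(f p ∧ f q)) :
    (l ++ p :: q :: r).filter f = (l ++ q :: p :: r).filter f := by
  by_cases hp : f p <;> by_cases hq : f q <;> simp_all

theorem switchVoter_filter {f : α → Bool} (l r : List α) {p q : α} (hp : f p) (hq : f q) :
    SwitchVoter ((l ++ p :: q :: r).filter f) ((l ++ q :: p :: r).filter f) :=
  ⟨l.filter f, r.filter f, p, q, by simp [hp, hq], by simp [hp, hq]⟩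

variable [DecidableEq α]

def projBlock (lo len : ℕ) (s : Finset α) (A : List (List α)) : List (List α) :=
  ((A.drop lo).take len).map (List.filter fun z => decide (z ∈ s))

theorem numPrefer_projBlock {lo len : ℕ} {s : Finset α} {x y : α} (hx : x ∈ s) (hy : y ∈ s)
    (A : List (List α)) :
    numPrefer (projBlock lo len s A) x y = numPrefer ((A.drop lo).take len) x y := by
  simp only [projBlock, numPrefer_eq_countP, List.countP_map]
  congr 1
  ext u
  simpa using prefers_filter_iff (f := fun z => decide (z ∈ s)) (by simpa) (by simpa) u

theorem projBlock_eq {lo : ℕ} {s : Finset α} {L : List α} {A V : List (List α)}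
    (hA : (A.drop lo).take V.length = V.map (L ++ ·)) (hL : ∀ z ∈ L, z ∉ s)
    (hV : ∀ v ∈ V, ∀ z ∈ v, z ∈ s) : projBlock lo V.length s A = V := by
  rw [projBlock, hA, List.map_map]
  conv_rhs => rw [← List.map_id V]
  refine List.map_congr_left fun v hv => ?_
  rw [Function.comp_apply, List.filter_append, List.filter_eq_nil_iff.2 (by simpa using hL),
    List.filter_eq_self.2 (by simpa using hV v hv), List.nil_append, id]

theorem SwitchProfile.projBlock_cases {lo len : ℕ} {s : Finset α} {A B : List (List α)}
    {x y : α} (hy : y ∉ s) (h : SwitchProfile A B) :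
    (projBlock lo len s A = projBlock lo len s B ∧ numPrefer B x y ≤ numPrefer A x y + 1) ∨
      (SwitchProfile (projBlock lo len s A) (projBlock lo len s B) ∧
        numPrefer B x y = numPrefer A x y) := by
  obtain ⟨P, Q, v, w, rfl, rfl, l, r, p, q, rfl, rfl⟩ := h
  simp only [projBlock, numPrefer_eq_countP, List.countP_append, List.countP_cons]
  by_cases hpq : p ∈ s ∧ q ∈ s
  · have hswap := prefers_swap_iff (l := l) (r := r) (x := x)
      (show y ≠ p by rintro rfl; exact hy hpq.1) (show y ≠ q by rintro rfl; exact hy hpq.2)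
    rcases List.take_drop_append_cons P Q (l ++ p :: q :: r) (l ++ q :: p :: r) lo len with
      hb | ⟨P', Q', hv, hw⟩
    · left
      simp [hb, hswap]
    · right
      simp only [hv, hw, List.map_append, List.map_cons, hswap, and_true]
      exact ⟨_, _, _, _, rfl, rfl,
        switchVoter_filter l r (by simpa using hpq.1) (by simpa using hpq.2)⟩
  · left
    refine ⟨?_, by split_ifs <;> omega⟩
    rcases List.take_drop_append_cons P Q (l ++ p :: q :: r) (l ++ q :: p :: r) lo len with
      hb | ⟨P', Q', hv, hw⟩
    · rw [hb]
    · simp only [hv, hw, List.map_append, List.map_cons,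
        filter_switch_of_not_and l r (f := fun z => decide (z ∈ s)) (by simpa using hpq)]

theorem Reach.exists_reach_projBlock {lo len : ℕ} {s : Finset α} {x y : α} (hy : y ∉ s)
    {k : ℕ} {A B : List (List α)} (h : Reach SwitchProfile k A B) :
    ∃ j ≤ k, Reach SwitchProfile j (projBlock lo len s A) (projBlock lo len s B) ∧
      numPrefer B x y ≤ numPrefer A x y + (k - j) := by
  induction k generalizing A with
  | zero => cases h; exact ⟨0, le_rfl, rfl, by omega⟩
  | succ k ih =>
    obtain ⟨M, hAM, hMB⟩ := h
    obtain ⟨j, hjk, hj, hnum⟩ := ih hMB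
    rcases hAM.projBlock_cases (lo := lo) (len := len) (x := x) hy with
      ⟨heq, hle⟩ | ⟨hsw, heq⟩
    · exact ⟨j, by omega, heq ▸ hj, by omega⟩
    · exact ⟨j + 1, by omega, ⟨_, hsw, hj⟩, by omega⟩

theorem dodgsonScore_projBlock_lt {lo len : ℕ} {s C : Finset α} {c y : α} {k : ℕ}
    {A B : List (List α)} (hys : y ∉ s) (hyC : y ∈ C) (hyc : y ≠ c)
    (htie : 2 * numPrefer A c y ≤ A.length) (h : Reach SwitchProfile k A B)
    (hB : CondorcetWinner C B c) (hproj : CondorcetWinner s (projBlock lo len s B) c) :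
    DodgsonScore s (projBlock lo len s A) c < k := by
  obtain ⟨j, hjk, hj, hnum⟩ := h.exists_reach_projBlock (lo := lo) (len := len) (x := c) hys
  have := hB.2 y hyC hyc
  have := h.length_eq
  have := dodgsonScore_le hj hproj
  omega

end Projection

section MergeProfile

variable {α : Type*} (c d : α) (cL dL sL tL : List α)

theorem length_mergeProfile {V W : List (List α)} (hV : Odd V.length)
    (hWV : W.length ≤ V.length) :
    (MergeProfile c d V W cL dL sL tL).length = 2 * V.length + W.length + 1 := by
  obtain ⟨a, ha⟩ := hV
  simp only [MergeProfile, List.length_append, List.length_map, List.length_replicate]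
  omega

theorem numPrefer_mergeProfile [DecidableEq α] (V W : List (List α)) (x y : α) :
    numPrefer (MergeProfile c d V W cL dL sL tL) x y =
      V.countP (fun v => prefers ([d] ++ sL ++ dL ++ tL ++ v) x y) +
      W.countP (fun w => prefers (tL ++ [c] ++ sL ++ cL ++ w) x y) +
      (if prefers (tL ++ [c] ++ sL ++ cL ++ dL ++ [d]) x y then
        (V.length + 1) / 2 - (W.length + 1) / 2 else 0) +
      (if prefers (tL ++ cL ++ dL ++ sL.reverse ++ [c, d]) x y then (V.length + 1) / 2 else 0) +
      (if prefers (tL ++ cL ++ dL ++ sL ++ [d, c]) x y then (W.length + 1) / 2 else 0) := by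
  simp only [MergeProfile, numPrefer_eq_countP, List.countP_append, List.countP_map,
    List.countP_replicate, Function.comp_def, decide_eq_true_eq]

theorem take_mergeProfile (V W : List (List α)) :
    (MergeProfile c d V W cL dL sL tL).take V.length = V.map ([d] ++ sL ++ dL ++ tL ++ ·) := by
  simp only [MergeProfile, List.append_assoc]
  exact List.take_left' (List.length_map _)

theorem drop_mergeProfile (V W : List (List α)) :
    (MergeProfile c d V W cL dL sL tL).drop V.length =
      W.map (tL ++ [c] ++ sL ++ cL ++ ·) ++
        List.replicate ((V.length + 1) / 2 - (W.length + 1) / 2)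
          (tL ++ [c] ++ sL ++ cL ++ dL ++ [d]) ++
      (List.replicate ((V.length + 1) / 2) (tL ++ cL ++ dL ++ sL.reverse ++ [c, d]) ++
        List.replicate ((W.length + 1) / 2) (tL ++ cL ++ dL ++ sL ++ [d, c])) := by
  simp only [MergeProfile, List.append_assoc]
  exact List.drop_left' (List.length_map _)

theorem reach_mergeProfile_left {k : ℕ} {V V' : List (List α)} (W : List (List α))
    (h : Reach SwitchProfile k V V') :
    Reach SwitchProfile k (MergeProfile c d V W cL dL sL tL)
      (MergeProfile c d V' W cL dL sL tL) := by
  have hlen := h.length_eq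
  unfold MergeProfile
  rw [← hlen]
  simpa using h.map (fun X => [] ++ X.map ([d] ++ sL ++ dL ++ tL ++ ·) ++ _)
    fun X Y hXY => hXY.embed _ _ _

theorem reach_mergeProfile_right {k : ℕ} (V : List (List α)) {W W' : List (List α)}
    (h : Reach SwitchProfile k W W') :
    Reach SwitchProfile k (MergeProfile c d V W cL dL sL tL)
      (MergeProfile c d V W' cL dL sL tL) := by
  have hlen := h.length_eq
  unfold MergeProfile
  rw [← hlen]
  simpa using h.map (fun X => V.map ([d] ++ sL ++ dL ++ tL ++ ·) ++
      X.map (tL ++ [c] ++ sL ++ cL ++ ·) ++ _)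
    fun X Y hXY => hXY.embed _ _ _

end MergeProfile

namespace MergeOK

variable {α : Type*} [DecidableEq α] {C D : Finset α} {c d x : α} {V W : List (List α)}
  {cL dL sL tL : List α}

theorem c_mem (h : MergeOK C D c d V W cL dL sL tL) : c ∈ C := h.1

theorem d_mem (h : MergeOK C D c d V W cL dL sL tL) : d ∈ D := h.2.1

theorem c_ne_d (h : MergeOK C D c d V W cL dL sL tL) : c ≠ d := h.2.2.1

theorem odd_length_V (h : MergeOK C D c d V W cL dL sL tL) : Odd V.length := h.2.2.2.2.1

theorem odd_length_W (h : MergeOK C D c d V W cL dL sL tL) : Odd W.length := h.2.2.2.2.2.1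

theorem length_W_le (h : MergeOK C D c d V W cL dL sL tL) : W.length ≤ V.length :=
  h.2.2.2.2.2.2.1

theorem isVoter_V (h : MergeOK C D c d V W cL dL sL tL) : ∀ v ∈ V, IsVoter C v :=
  h.2.2.2.2.2.2.2.1

theorem isVoter_W (h : MergeOK C D c d V W cL dL sL tL) : ∀ w ∈ W, IsVoter D w :=
  h.2.2.2.2.2.2.2.2.1

theorem mem_cL (h : MergeOK C D c d V W cL dL sL tL) : x ∈ cL ↔ x ∈ C ∧ x ≠ c :=
  h.2.2.2.2.2.2.2.2.2.2.1 x

theorem mem_dL (h : MergeOK C D c d V W cL dL sL tL) : x ∈ dL ↔ x ∈ D ∧ x ≠ d :=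
  h.2.2.2.2.2.2.2.2.2.2.2.2.1 x

theorem length_sL (h : MergeOK C D c d V W cL dL sL tL) :
    sL.length = 2 * (C.card * V.length + D.card * W.length) :=
  h.2.2.2.2.2.2.2.2.2.2.2.2.2.2.2.1

theorem notMem_D_of_mem_C (h : MergeOK C D c d V W cL dL sL tL) (hx : x ∈ C) : x ∉ D :=
  Finset.disjoint_left.1 h.2.2.2.1 hx

theorem notMem_C_of_mem_D (h : MergeOK C D c d V W cL dL sL tL) (hx : x ∈ D) : x ∉ C :=
  Finset.disjoint_right.1 h.2.2.2.1 hx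

theorem notMem_sL_of_mem_C (h : MergeOK C D c d V W cL dL sL tL) (hx : x ∈ C) : x ∉ sL :=
  fun hs => (h.2.2.2.2.2.2.2.2.2.2.2.2.2.2.2.2.2.1 x hs).1 hx

theorem notMem_sL_of_mem_D (h : MergeOK C D c d V W cL dL sL tL) (hx : x ∈ D) : x ∉ sL :=
  fun hs => (h.2.2.2.2.2.2.2.2.2.2.2.2.2.2.2.2.2.1 x hs).2.1 hx

theorem notMem_tL_of_mem_C (h : MergeOK C D c d V W cL dL sL tL) (hx : x ∈ C) : x ∉ tL :=
  fun ht => (h.2.2.2.2.2.2.2.2.2.2.2.2.2.2.2.2.2.2 x ht).1 hx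

theorem notMem_tL_of_mem_D (h : MergeOK C D c d V W cL dL sL tL) (hx : x ∈ D) : x ∉ tL :=
  fun ht => (h.2.2.2.2.2.2.2.2.2.2.2.2.2.2.2.2.2.2 x ht).2 hx

theorem notMem_dL_of_mem_C (h : MergeOK C D c d V W cL dL sL tL) (hx : x ∈ C) : x ∉ dL :=
  fun hd => h.notMem_D_of_mem_C hx (h.mem_dL.1 hd).1

theorem notMem_cL_of_mem_D (h : MergeOK C D c d V W cL dL sL tL) (hx : x ∈ D) : x ∉ cL :=
  fun hc => h.notMem_C_of_mem_D hx (h.mem_cL.1 hc).1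

theorem ne_d_of_mem_C (h : MergeOK C D c d V W cL dL sL tL) (hx : x ∈ C) : x ≠ d :=
  fun hxd => h.notMem_D_of_mem_C hx (hxd ▸ h.d_mem)

theorem ne_c_of_mem_D (h : MergeOK C D c d V W cL dL sL tL) (hx : x ∈ D) : x ≠ c :=
  fun hxc => h.notMem_C_of_mem_D hx (hxc ▸ h.c_mem)

theorem c_notMem_cL (h : MergeOK C D c d V W cL dL sL tL) : c ∉ cL :=
  fun hc => (h.mem_cL.1 hc).2 rfl

theorem d_notMem_dL (h : MergeOK C D c d V W cL dL sL tL) : d ∉ dL :=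
  fun hd => (h.mem_dL.1 hd).2 rfl

theorem mem_mergeCands (h : MergeOK C D c d V W cL dL sL tL) :
    x ∈ MergeCands C D sL tL ↔ x = c ∨ x ∈ cL ∨ x = d ∨ x ∈ dL ∨ x ∈ sL ∨ x ∈ tL := by
  have hc := h.c_mem
  have hd := h.d_mem
  simp only [MergeCands, Finset.mem_union, List.mem_toFinset, h.mem_cL, h.mem_dL]
  by_cases hxc : x = c <;> by_cases hxd : x = d <;> simp_all [or_assoc]

theorem prefers_voterA_iff (h : MergeOK C D c d V W cL dL sL tL) (hx : x ∈ C) (v : List α) :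
    prefers ([d] ++ sL ++ dL ++ tL ++ v) c x ↔ prefers v c x := by
  have hc := h.c_mem
  refine prefers_append_iff_of_notMem ?_ ?_
  · simp [h.c_ne_d, h.notMem_sL_of_mem_C hc, h.notMem_dL_of_mem_C hc, h.notMem_tL_of_mem_C hc]
  · simp [h.ne_d_of_mem_C hx, h.notMem_sL_of_mem_C hx, h.notMem_dL_of_mem_C hx,
      h.notMem_tL_of_mem_C hx]

theorem prefers_voterA (h : MergeOK C D c d V W cL dL sL tL) (hx : x ∈ MergeCands C D sL tL)
    (hxC : x ∉ C) (v : List α) : prefers ([d] ++ sL ++ dL ++ tL ++ v) c x := by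
  have hc := h.c_mem
  have hxcL : x ∉ cL := fun hx => hxC (h.mem_cL.1 hx).1
  have hxc : x ≠ c := by rintro rfl; exact hxC hc
  refine prefers_of_isPrefix (List.prefix_append _ v) ?_ ?_
  · have := h.mem_mergeCands.1 hx
    simp only [List.mem_append, List.mem_singleton]
    tauto
  · simp [h.c_ne_d, h.notMem_sL_of_mem_C hc, h.notMem_dL_of_mem_C hc, h.notMem_tL_of_mem_C hc]

theorem prefers_voterB_iff (h : MergeOK C D c d V W cL dL sL tL) (hx : x ∈ D) (w : List α) :
    prefers (tL ++ [c] ++ sL ++ cL ++ w) d x ↔ prefers w d x := by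
  have hd := h.d_mem
  refine prefers_append_iff_of_notMem ?_ ?_
  · simp [h.c_ne_d.symm, h.notMem_sL_of_mem_D hd, h.notMem_cL_of_mem_D hd,
      h.notMem_tL_of_mem_D hd]
  · simp [h.ne_c_of_mem_D hx, h.notMem_sL_of_mem_D hx, h.notMem_cL_of_mem_D hx,
      h.notMem_tL_of_mem_D hx]

theorem prefers_voterB (h : MergeOK C D c d V W cL dL sL tL) (hx : x ∈ MergeCands C D sL tL)
    (hxD : x ∉ D) (w : List α) : prefers (tL ++ [c] ++ sL ++ cL ++ w) d x := by
  have hd := h.d_mem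
  have hxdL : x ∉ dL := fun hx => hxD (h.mem_dL.1 hx).1
  have hxd : x ≠ d := by rintro rfl; exact hxD hd
  refine prefers_of_isPrefix (List.prefix_append _ w) ?_ ?_
  · have := h.mem_mergeCands.1 hx
    simp only [List.mem_append, List.mem_singleton]
    tauto
  · simp [h.c_ne_d.symm, h.notMem_sL_of_mem_D hd, h.notMem_cL_of_mem_D hd,
      h.notMem_tL_of_mem_D hd]

theorem prefers_voterC (h : MergeOK C D c d V W cL dL sL tL) (hx : x ∈ MergeCands C D sL tL)
    (hxd : x ≠ d) : prefers (tL ++ [c] ++ sL ++ cL ++ dL ++ [d]) d x := by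
  have hd := h.d_mem
  refine prefers_of_isPrefix (List.prefix_append _ _) ?_ ?_
  · have := h.mem_mergeCands.1 hx
    simp only [List.mem_append, List.mem_singleton]
    tauto
  · simp [h.notMem_tL_of_mem_D hd, h.c_ne_d.symm, h.notMem_sL_of_mem_D hd,
      h.notMem_cL_of_mem_D hd, h.d_notMem_dL]

theorem c_notMem_of_mem_iff (h : MergeOK C D c d V W cL dL sL tL) {L : List α}
    (hL : ∀ z, z ∈ L ↔ z ∈ tL ∨ z ∈ cL ∨ z ∈ dL ∨ z ∈ sL) : c ∉ L := by
  have hc := h.c_mem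
  simp [hL, h.notMem_tL_of_mem_C hc, h.c_notMem_cL, h.notMem_dL_of_mem_C hc,
    h.notMem_sL_of_mem_C hc]

theorem d_notMem_of_mem_iff (h : MergeOK C D c d V W cL dL sL tL) {L : List α}
    (hL : ∀ z, z ∈ L ↔ z ∈ tL ∨ z ∈ cL ∨ z ∈ dL ∨ z ∈ sL) : d ∉ L := by
  have hd := h.d_mem
  simp [hL, h.notMem_tL_of_mem_D hd, h.notMem_cL_of_mem_D hd, h.d_notMem_dL,
    h.notMem_sL_of_mem_D hd]

theorem prefers_c_top (h : MergeOK C D c d V W cL dL sL tL) {L : List α}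
    (hL : ∀ z, z ∈ L ↔ z ∈ tL ∨ z ∈ cL ∨ z ∈ dL ∨ z ∈ sL) (hx : x ∈ MergeCands C D sL tL)
    (hxc : x ≠ c) : prefers (L ++ [d, c]) c x := by
  refine prefers_of_isPrefix (L := L ++ [d]) (by simp) ?_ ?_
  · have := h.mem_mergeCands.1 hx
    simp only [List.mem_append, List.mem_singleton, hL]
    tauto
  · simp [h.c_notMem_of_mem_iff hL, h.c_ne_d]

theorem prefers_d_top (h : MergeOK C D c d V W cL dL sL tL) {L : List α}
    (hL : ∀ z, z ∈ L ↔ z ∈ tL ∨ z ∈ cL ∨ z ∈ dL ∨ z ∈ sL) (hx : x ∈ MergeCands C D sL tL)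
    (hxd : x ≠ d) : prefers (L ++ [c, d]) d x := by
  refine prefers_of_isPrefix (L := L ++ [c]) (by simp) ?_ ?_
  · have := h.mem_mergeCands.1 hx
    simp only [List.mem_append, List.mem_singleton, hL]
    tauto
  · simp [h.d_notMem_of_mem_iff hL, h.c_ne_d.symm]

theorem projBlock_V (h : MergeOK C D c d V W cL dL sL tL) :
    projBlock 0 V.length C (MergeProfile c d V W cL dL sL tL) = V := by
  refine projBlock_eq (L := [d] ++ sL ++ dL ++ tL) (by rw [List.drop_zero, take_mergeProfile])
    (fun z hz => ?_) fun v hv z hz => ((h.isVoter_V v hv).2 z).1 hz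
  simp only [List.mem_append, List.mem_singleton] at hz
  rcases hz with ((rfl | hz) | hz) | hz
  · exact h.notMem_C_of_mem_D h.d_mem
  · exact fun hzC => h.notMem_sL_of_mem_C hzC hz
  · exact h.notMem_C_of_mem_D (h.mem_dL.1 hz).1
  · exact fun hzC => h.notMem_tL_of_mem_C hzC hz

theorem two_mul_numPrefer_c_d_le (h : MergeOK C D c d V W cL dL sL tL) :
    2 * numPrefer (MergeProfile c d V W cL dL sL tL) c d ≤
      (MergeProfile c d V W cL dL sL tL).length := by
  have hd := h.d_mem
  have hdc : d ≠ c := h.c_ne_d.symm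
  have hW : ∀ w ∈ W, ¬ prefers (tL ++ [c] ++ sL ++ cL ++ w) c d := fun w _ =>
    not_prefers_of_isPrefix (L := tL ++ [c]) (by simp) (by simp)
      (by simp [h.notMem_tL_of_mem_D hd, hdc])
  have h3 : ¬ prefers (tL ++ [c] ++ sL ++ cL ++ dL ++ [d]) c d :=
    not_prefers_of_isPrefix (L := tL ++ [c]) (by simp) (by simp)
      (by simp [h.notMem_tL_of_mem_D hd, hdc])
  have h4 : ¬ prefers (tL ++ cL ++ dL ++ sL.reverse ++ [c, d]) c d :=
    not_prefers_of_isPrefix (L := tL ++ cL ++ dL ++ sL.reverse ++ [c]) (by simp) (by simp)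
      (by simp [h.notMem_tL_of_mem_D hd, h.notMem_cL_of_mem_D hd, h.d_notMem_dL,
        h.notMem_sL_of_mem_D hd, hdc])
  have hV := List.countP_le_length (l := V)
    (p := fun v => decide (prefers ([d] ++ sL ++ dL ++ tL ++ v) c d))
  obtain ⟨a, ha⟩ := h.odd_length_V
  obtain ⟨b, hb⟩ := h.odd_length_W
  rw [numPrefer_mergeProfile, length_mergeProfile _ _ _ _ _ _ h.odd_length_V h.length_W_le,
    if_neg h3, if_neg h4, List.countP_eq_zero (l := W).2 (by simpa using hW)]
  split_ifs <;> omega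

theorem condorcetWinner_projBlock_V (h : MergeOK C D c d V W cL dL sL tL) {k : ℕ}
    {Q : List (List α)} (hk : 2 * k ≤ sL.length)
    (hPQ : Reach SwitchProfile k (MergeProfile c d V W cL dL sL tL) Q)
    (hQ : CondorcetWinner (MergeCands C D sL tL) Q c) :
    CondorcetWinner C (projBlock 0 V.length C Q) c := by
  refine ⟨h.c_mem, fun x hx hxc => ?_⟩
  have hQlen : Q.length = 2 * V.length + W.length + 1 := by
    rw [← hPQ.length_eq, length_mergeProfile _ _ _ _ _ _ h.odd_length_V h.length_W_le]
  set r := W.length + ((V.length + 1) / 2 - (W.length + 1) / 2)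
  have hfar : numPrefer ((Q.drop V.length).take r) c x = 0 := by
    refine numPrefer_eq_zero_of_forall₂
      (List.forall₂_take r (List.forall₂_drop V.length hPQ.forall₂)) ?_
    rw [drop_mergeProfile, List.take_left' (by simp [r])]
    have hsep : ∀ R, (tL ++ c :: (sL ++ R)).idxOf c + sL.length <
        (tL ++ c :: (sL ++ R)).idxOf x := fun R =>
      idxOf_add_length_lt_idxOf (h.notMem_tL_of_mem_C h.c_mem) (h.notMem_tL_of_mem_C hx) hxc
        (h.notMem_sL_of_mem_C hx)
    intro u hu
    simp only [List.mem_append, List.mem_map, List.mem_replicate] at hu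
    rcases hu with ⟨w, -, rfl⟩ | ⟨-, rfl⟩
    · have := hsep (cL ++ w)
      simp only [List.append_assoc, List.cons_append, List.nil_append] at this ⊢
      omega
    · have := hsep (cL ++ dL ++ [d])
      simp only [List.append_assoc, List.cons_append, List.nil_append] at this ⊢
      omega
  have hrest := numPrefer_le_length ((Q.drop V.length).drop r) c x
  rw [List.length_drop, List.length_drop] at hrest
  have hsplit := numPrefer_eq_take_add_drop Q c x V.length r
  have hwin := hQ.2 x (by simp [MergeCands, hx]) hxc
  have hproj : (projBlock 0 V.length C Q).length = V.length := by
    simp [projBlock, hQlen]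
    omega
  rw [numPrefer_projBlock h.c_mem hx, List.drop_zero, hproj]
  obtain ⟨a, ha⟩ := h.odd_length_V
  obtain ⟨b, hb⟩ := h.odd_length_W
  omega

theorem dodgsonScore_lt_of_reach_c (h : MergeOK C D c d V W cL dL sL tL) {k : ℕ}
    {Q : List (List α)} (hPQ : Reach SwitchProfile k (MergeProfile c d V W cL dL sL tL) Q)
    (hQ : CondorcetWinner (MergeCands C D sL tL) Q c) : DodgsonScore C V c < k := by
  have hV : V ≠ [] := by rintro rfl; exact Nat.not_odd_zero h.odd_length_V
  by_cases hk : C.card * V.length < k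
  · exact (dodgsonScore_le_card_mul h.c_mem h.isVoter_V hV).trans_lt hk
  have hks : 2 * k ≤ sL.length := by rw [h.length_sL]; omega
  have := dodgsonScore_projBlock_lt (h.notMem_C_of_mem_D h.d_mem)
    (by simp [MergeCands, h.d_mem]) h.c_ne_d.symm h.two_mul_numPrefer_c_d_le hPQ hQ
    (h.condorcetWinner_projBlock_V hks hPQ hQ)
  rwa [h.projBlock_V] at this

theorem exists_reach_condorcetWinner_c (h : MergeOK C D c d V W cL dL sL tL) :
    ∃ Q, Reach SwitchProfile (DodgsonScore C V c + 1) (MergeProfile c d V W cL dL sL tL) Q ∧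
      CondorcetWinner (MergeCands C D sL tL) Q c := by
  obtain ⟨a, ha⟩ := h.odd_length_V
  obtain ⟨b, hb⟩ := h.odd_length_W
  obtain ⟨V', hVV', hV'⟩ := exists_reach_dodgsonScore h.c_mem h.isVoter_V
    (by rintro rfl; simp at ha)
  have hlen := hVV'.length_eq
  set pre := tL ++ cL ++ dL ++ sL.reverse
  have hpre : ∀ z, z ∈ pre ↔ z ∈ tL ∨ z ∈ cL ∨ z ∈ dL ∨ z ∈ sL := by simp [pre]
  set P := V'.map ([d] ++ sL ++ dL ++ tL ++ ·) ++ W.map (tL ++ [c] ++ sL ++ cL ++ ·) ++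
    List.replicate ((V.length + 1) / 2 - (W.length + 1) / 2) (tL ++ [c] ++ sL ++ cL ++ dL ++ [d])
  set R := List.replicate a (pre ++ [c, d]) ++
    List.replicate ((W.length + 1) / 2) (tL ++ cL ++ dL ++ sL ++ [d, c])
  have hswitch : SwitchProfile (MergeProfile c d V' W cL dL sL tL) (P ++ (pre ++ [d, c]) :: R) :=
    ⟨P, R, _, _, by simp [MergeProfile, P, R, pre, ← hlen, ha,
      show (2 * a + 1 + 1) / 2 = a + 1 by omega, List.replicate_succ], rfl, pre, [], c, d, rfl, rfl⟩
  refine ⟨_, (reach_mergeProfile_left c d cL dL sL tL W hVV').trans (.single hswitch),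
    by simp [MergeCands, h.c_mem], fun x hx hxc => ?_⟩
  have hQlen := (Reach.single hswitch).length_eq
  rw [length_mergeProfile _ _ _ _ _ _ (hlen ▸ h.odd_length_V) (hlen ▸ h.length_W_le)] at hQlen
  rw [← hQlen]
  simp only [P, R, numPrefer_eq_countP, List.countP_append, List.countP_cons, List.countP_replicate,
    List.countP_map, Function.comp_def, decide_eq_true_eq, if_pos (h.prefers_c_top hpre hx hxc),
    if_pos (h.prefers_c_top (L := tL ++ cL ++ dL ++ sL) (by simp) hx hxc)]
  by_cases hxC : x ∈ C
  · have h4 : prefers (pre ++ [c, d]) c x := prefers_of_isPrefix (List.prefix_append _ _)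
      ((hpre x).2 (.inr (.inl (h.mem_cL.2 ⟨hxC, hxc⟩)))) (h.c_notMem_of_mem_iff hpre)
    rw [List.countP_congr (l := V') (q := (prefers · c x)) fun v _ => by
      simpa using h.prefers_voterA_iff hxC v, ← numPrefer_eq_countP, if_pos h4]
    have := hV'.2 x hxC hxc
    omega
  · rw [List.countP_eq_length (l := V').2 fun v _ => by simpa using h.prefers_voterA hx hxC v]
    omega

theorem projBlock_W (h : MergeOK C D c d V W cL dL sL tL) :
    projBlock V.length W.length D (MergeProfile c d V W cL dL sL tL) = W := by
  refine projBlock_eq (L := tL ++ [c] ++ sL ++ cL)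
    (by rw [drop_mergeProfile, List.append_assoc, List.take_left' (List.length_map _)])
    (fun z hz => ?_) fun w hw z hz => ((h.isVoter_W w hw).2 z).1 hz
  simp only [List.mem_append, List.mem_singleton] at hz
  rcases hz with ((hz | rfl) | hz) | hz
  · exact fun hzD => h.notMem_tL_of_mem_D hzD hz
  · exact h.notMem_D_of_mem_C h.c_mem
  · exact fun hzD => h.notMem_sL_of_mem_D hzD hz
  · exact h.notMem_D_of_mem_C (h.mem_cL.1 hz).1

theorem two_mul_numPrefer_d_c_le (h : MergeOK C D c d V W cL dL sL tL) :
    2 * numPrefer (MergeProfile c d V W cL dL sL tL) d c ≤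
      (MergeProfile c d V W cL dL sL tL).length := by
  have hc := h.c_mem
  have hV : ∀ v ∈ V, ¬ prefers ([d] ++ sL ++ dL ++ tL ++ v) d c := fun v _ =>
    not_prefers_of_isPrefix (L := [d]) (by simp) (by simp) (by simp [h.c_ne_d])
  have h5 : ¬ prefers (tL ++ cL ++ dL ++ sL ++ [d, c]) d c :=
    not_prefers_of_isPrefix (L := tL ++ cL ++ dL ++ sL ++ [d]) (by simp) (by simp)
      (by simp [h.notMem_tL_of_mem_C hc, h.c_notMem_cL, h.notMem_dL_of_mem_C hc,
        h.notMem_sL_of_mem_C hc, h.c_ne_d])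
  have hW := List.countP_le_length (l := W)
    (p := fun w => decide (prefers (tL ++ [c] ++ sL ++ cL ++ w) d c))
  obtain ⟨a, ha⟩ := h.odd_length_V
  obtain ⟨b, hb⟩ := h.odd_length_W
  rw [numPrefer_mergeProfile, length_mergeProfile _ _ _ _ _ _ h.odd_length_V h.length_W_le,
    if_neg h5, List.countP_eq_zero (l := V).2 (by simpa using hV)]
  have := h.length_W_le
  split_ifs <;> omega

theorem condorcetWinner_projBlock_W (h : MergeOK C D c d V W cL dL sL tL) {k : ℕ}
    {Q : List (List α)} (hk : 2 * k ≤ sL.length)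
    (hPQ : Reach SwitchProfile k (MergeProfile c d V W cL dL sL tL) Q)
    (hQ : CondorcetWinner (MergeCands C D sL tL) Q d) :
    CondorcetWinner D (projBlock V.length W.length D Q) d := by
  refine ⟨h.d_mem, fun x hx hxd => ?_⟩
  have hQlen : Q.length = 2 * V.length + W.length + 1 := by
    rw [← hPQ.length_eq, length_mergeProfile _ _ _ _ _ _ h.odd_length_V h.length_W_le]
  have hfar : numPrefer (Q.take V.length) d x = 0 := by
    refine numPrefer_eq_zero_of_forall₂ (List.forall₂_take V.length hPQ.forall₂) ?_
    rw [take_mergeProfile]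
    intro u hu
    obtain ⟨v, -, rfl⟩ := List.mem_map.1 hu
    have := idxOf_add_length_lt_idxOf (L := []) (R := dL ++ tL ++ v) (List.not_mem_nil)
      List.not_mem_nil hxd (h.notMem_sL_of_mem_D hx)
    simp only [List.append_assoc, List.cons_append, List.nil_append] at this ⊢
    omega
  have hrest := numPrefer_le_length ((Q.drop V.length).drop W.length) d x
  rw [List.length_drop, List.length_drop] at hrest
  have hsplit := numPrefer_eq_take_add_drop Q d x V.length W.length
  have hwin := hQ.2 x (by simp [MergeCands, hx]) hxd
  have hproj : (projBlock V.length W.length D Q).length = W.length := by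
    simp [projBlock, hQlen]
    omega
  rw [numPrefer_projBlock h.d_mem hx, hproj]
  obtain ⟨a, ha⟩ := h.odd_length_V
  obtain ⟨b, hb⟩ := h.odd_length_W
  omega

theorem dodgsonScore_lt_of_reach_d (h : MergeOK C D c d V W cL dL sL tL) {k : ℕ}
    {Q : List (List α)} (hPQ : Reach SwitchProfile k (MergeProfile c d V W cL dL sL tL) Q)
    (hQ : CondorcetWinner (MergeCands C D sL tL) Q d) : DodgsonScore D W d < k := by
  have hW : W ≠ [] := by rintro rfl; exact Nat.not_odd_zero h.odd_length_W
  by_cases hk : D.card * W.length < k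
  · exact (dodgsonScore_le_card_mul h.d_mem h.isVoter_W hW).trans_lt hk
  have hks : 2 * k ≤ sL.length := by rw [h.length_sL]; omega
  have := dodgsonScore_projBlock_lt (h.notMem_D_of_mem_C h.c_mem)
    (by simp [MergeCands, h.c_mem]) h.c_ne_d h.two_mul_numPrefer_d_c_le hPQ hQ
    (h.condorcetWinner_projBlock_W hks hPQ hQ)
  rwa [h.projBlock_W] at this

theorem exists_reach_condorcetWinner_d (h : MergeOK C D c d V W cL dL sL tL) :
    ∃ Q, Reach SwitchProfile (DodgsonScore D W d + 1) (MergeProfile c d V W cL dL sL tL) Q ∧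
      CondorcetWinner (MergeCands C D sL tL) Q d := by
  obtain ⟨a, ha⟩ := h.odd_length_V
  obtain ⟨b, hb⟩ := h.odd_length_W
  obtain ⟨W', hWW', hW'⟩ := exists_reach_dodgsonScore h.d_mem h.isVoter_W
    (by rintro rfl; simp at hb)
  have hlen := hWW'.length_eq
  set pre := tL ++ cL ++ dL ++ sL
  have hpre : ∀ z, z ∈ pre ↔ z ∈ tL ∨ z ∈ cL ∨ z ∈ dL ∨ z ∈ sL := by simp [pre]
  set P := V.map ([d] ++ sL ++ dL ++ tL ++ ·) ++ W'.map (tL ++ [c] ++ sL ++ cL ++ ·) ++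
    List.replicate ((V.length + 1) / 2 - (W.length + 1) / 2) (tL ++ [c] ++ sL ++ cL ++ dL ++ [d]) ++
    List.replicate ((V.length + 1) / 2) (tL ++ cL ++ dL ++ sL.reverse ++ [c, d])
  set R := List.replicate b (pre ++ [d, c])
  have hswitch : SwitchProfile (MergeProfile c d V W' cL dL sL tL) (P ++ (pre ++ [c, d]) :: R) :=
    ⟨P, R, _, _, by simp [MergeProfile, P, R, pre, ← hlen, hb,
      show (2 * b + 1 + 1) / 2 = b + 1 by omega, List.replicate_succ], rfl, pre, [], d, c, rfl, rfl⟩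
  refine ⟨_, (reach_mergeProfile_right c d cL dL sL tL V hWW').trans (.single hswitch),
    by simp [MergeCands, h.d_mem], fun x hx hxd => ?_⟩
  have hQlen := (Reach.single hswitch).length_eq
  rw [length_mergeProfile _ _ _ _ _ _ h.odd_length_V (hlen ▸ h.length_W_le)] at hQlen
  rw [← hQlen]
  simp only [P, R, numPrefer_eq_countP, List.countP_append, List.countP_cons, List.countP_replicate,
    List.countP_map, Function.comp_def, decide_eq_true_eq, if_pos (h.prefers_d_top hpre hx hxd),
    if_pos (h.prefers_d_top (L := tL ++ cL ++ dL ++ sL.reverse) (by simp) hx hxd),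
    if_pos (h.prefers_voterC hx hxd)]
  by_cases hxD : x ∈ D
  · have h5 : prefers (pre ++ [d, c]) d x := prefers_of_isPrefix (List.prefix_append _ _)
      ((hpre x).2 (.inr (.inr (.inl (h.mem_dL.2 ⟨hxD, hxd⟩))))) (h.d_notMem_of_mem_iff hpre)
    rw [List.countP_congr (l := W') (q := (prefers · d x)) fun w _ => by
      simpa using h.prefers_voterB_iff hxD w, ← numPrefer_eq_countP, if_pos h5]
    have := hW'.2 x hxD hxd
    omega
  · rw [List.countP_eq_length (l := W').2 fun w _ => by simpa using h.prefers_voterB hx hxD w]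
    omega

end MergeOK

/-- In the `Merge` election, the Dodgson score of `c` equals
`Score(C,c,V) + 1` and the Dodgson score of `d` equals `Score(D,d,W) + 1`. -/
theorem merge_scores {α : Type*} [DecidableEq α]
    (C D : Finset α) (c d : α) (V W : List (List α)) (cL dL sL tL : List α)
    (hok : MergeOK C D c d V W cL dL sL tL) :
    DodgsonScore (MergeCands C D sL tL) (MergeProfile c d V W cL dL sL tL) c =
      DodgsonScore C V c + 1 ∧
    DodgsonScore (MergeCands C D sL tL) (MergeProfile c d V W cL dL sL tL) d =
      DodgsonScore D W d + 1 := by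
  obtain ⟨Qc, hPQc, hQc⟩ := hok.exists_reach_condorcetWinner_c
  obtain ⟨Qd, hPQd, hQd⟩ := hok.exists_reach_condorcetWinner_d
  exact ⟨dodgsonScore_eq_of_forall_le hPQc hQc fun _ _ => hok.dodgsonScore_lt_of_reach_c,
    dodgsonScore_eq_of_forall_le hPQd hQd fun _ _ => hok.dodgsonScore_lt_of_reach_d⟩
end
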